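/- arXiv:1412.5165 — 7 statements merged into one kernel-verified Lean document; each statement's English description precedes it below -/
import Mathlib

section
/- Let t>0, λ∈ℝ, and h a C² nonnegative function on [0,t] satisfying h'' ≤ -λ h on [0,t]. If λ > π²/t², then h is identically zero on [0,t]. -/
/-!
With `c = π / t`, the function `φ s = sin (c s)` is positive on `(0, t)`, vanishes at both ends
and solves `φ'' = -c² φ`. The Wronskian `W = h' φ - h φ'` then satisfies
`W' = (h'' + c² h) φ ≤ (c² - λ) h φ ≤ 0`, so `W` is antitone on `[0, t]`. Its boundary values are
`W 0 = -c h 0 ≤ 0 ≤ c h t = W t`, which forces `W ≡ 0`; then `(λ - c²) h φ ≤ -W' = 0` kills `h` on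
`(0, t)`, and `W 0 = W t = 0` kills it at the endpoints.
-/

open Real Set

theorem HasDerivAt.wronskian {u u' v v' : ℝ → ℝ} {u'' v'' x : ℝ}
    (hu : HasDerivAt u (u' x) x) (hu' : HasDerivAt u' u'' x)
    (hv : HasDerivAt v (v' x) x) (hv' : HasDerivAt v' v'' x) :
    HasDerivAt (fun y ↦ u' y * v y - u y * v' y) (u'' * v x - u x * v'') x :=
  ((hu'.mul hv).sub (hu.mul hv')).congr_deriv (by ring)

section Icc

variable {a b s : ℝ} {h : ℝ → ℝ}

theorem ContDiffOn.hasDerivAt_of_mem_Ioo (hh : ContDiffOn ℝ 2 h (Icc a b)) (hs : s ∈ Ioo a b) :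
    HasDerivAt h (derivWithin h (Icc a b) s) s := by
  have hnhds : Icc a b ∈ nhds s := Icc_mem_nhds hs.1 hs.2
  rw [derivWithin_of_mem_nhds hnhds]
  exact ((hh.contDiffAt hnhds).differentiableAt (by norm_num)).hasDerivAt

theorem ContDiffOn.hasDerivAt_derivWithin_of_mem_Ioo (hh : ContDiffOn ℝ 2 h (Icc a b))
    (hs : s ∈ Ioo a b) : HasDerivAt (derivWithin h (Icc a b)) (deriv (deriv h) s) s := by
  have hab : a < b := hs.1.trans hs.2
  have hnhds : Icc a b ∈ nhds s := Icc_mem_nhds hs.1 hs.2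
  have hEq : derivWithin h (Icc a b) =ᶠ[nhds s] deriv h := by
    filter_upwards [isOpen_Ioo.mem_nhds hs] with x hx
    exact derivWithin_of_mem_nhds (Icc_mem_nhds hx.1 hx.2)
  rw [← hEq.deriv_eq]
  exact (((hh.derivWithin (uniqueDiffOn_Icc hab) (m := 1) (by norm_num)).contDiffAt
    hnhds).differentiableAt (by norm_num)).hasDerivAt

end Icc

/-- `derivWithin` keeps the Wronskian continuous up to the endpoints, where `deriv h` may be a
junk value. -/
noncomputable def sineWronskian (t : ℝ) (h : ℝ → ℝ) (s : ℝ) : ℝ :=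
  derivWithin h (Icc 0 t) s * sin (π / t * s) - h s * (π / t * cos (π / t * s))

section sineWronskian

variable {t : ℝ} {h : ℝ → ℝ}

theorem sin_pi_div_mul_pos (ht : 0 < t) {s : ℝ} (hs : s ∈ Ioo 0 t) : 0 < sin (π / t * s) := by
  apply sin_pos_of_pos_of_lt_pi (by have := hs.1; positivity)
  rw [div_mul_eq_mul_div, div_lt_iff₀ ht]
  exact mul_lt_mul_of_pos_left hs.2 pi_pos

theorem sineWronskian_zero : sineWronskian t h 0 = -(π / t * h 0) := by
  simp [sineWronskian, mul_comm]

theorem sineWronskian_self (ht : 0 < t) : sineWronskian t h t = π / t * h t := by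
  simp [sineWronskian, div_mul_cancel₀ π ht.ne', mul_comm]

theorem continuousOn_sineWronskian (ht : 0 < t) (hh : ContDiffOn ℝ 2 h (Icc 0 t)) :
    ContinuousOn (sineWronskian t h) (Icc 0 t) := by
  unfold sineWronskian
  have := hh.continuousOn_derivWithin (uniqueDiffOn_Icc ht) (by norm_num)
  have := hh.continuousOn
  fun_prop

theorem hasDerivAt_sineWronskian (hh : ContDiffOn ℝ 2 h (Icc 0 t)) {s : ℝ} (hs : s ∈ Ioo 0 t) :
    HasDerivAt (sineWronskian t h)
      ((deriv (deriv h) s + (π / t) ^ 2 * h s) * sin (π / t * s)) s := by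
  have hsin (x : ℝ) : HasDerivAt (fun y ↦ sin (π / t * y)) (π / t * cos (π / t * x)) x := by
    simpa [mul_comm] using ((hasDerivAt_id x).const_mul (π / t)).sin
  have hcos :
      HasDerivAt (fun y ↦ π / t * cos (π / t * y)) (-((π / t) ^ 2 * sin (π / t * s))) s := by
    simpa [mul_comm, pow_two, mul_assoc] using
      (((hasDerivAt_id s).const_mul (π / t)).cos).const_mul (π / t)
  exact ((hh.hasDerivAt_of_mem_Ioo hs).wronskian (hh.hasDerivAt_derivWithin_of_mem_Ioo hs)
    (hsin s) hcos).congr_deriv (by ring)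

theorem sineWronskian_deriv_le {lam s : ℝ} (ht : 0 < t) (hs : s ∈ Ioo 0 t)
    (hineq : deriv (deriv h) s ≤ -lam * h s) :
    (deriv (deriv h) s + (π / t) ^ 2 * h s) * sin (π / t * s) ≤
      ((π / t) ^ 2 - lam) * (h s * sin (π / t * s)) := by
  have := mul_le_mul_of_nonneg_right hineq (sin_pi_div_mul_pos ht hs).le
  linarith

theorem antitoneOn_sineWronskian {lam : ℝ} (ht : 0 < t) (hlam : (π / t) ^ 2 ≤ lam)
    (hh : ContDiffOn ℝ 2 h (Icc 0 t)) (hnn : ∀ s ∈ Icc 0 t, 0 ≤ h s)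
    (hineq : ∀ s ∈ Icc 0 t, deriv (deriv h) s ≤ -lam * h s) :
    AntitoneOn (sineWronskian t h) (Icc 0 t) := by
  refine antitoneOn_of_hasDerivWithinAt_nonpos (convex_Icc 0 t) (continuousOn_sineWronskian ht hh)
    (f' := fun s ↦ (deriv (deriv h) s + (π / t) ^ 2 * h s) * sin (π / t * s))
    (fun s hs ↦ ?_) (fun s hs ↦ ?_) <;> rw [interior_Icc] at hs
  · exact (hasDerivAt_sineWronskian hh hs).hasDerivWithinAt
  · have hsI := Ioo_subset_Icc_self hs
    refine (sineWronskian_deriv_le ht hs (hineq s hsI)).trans ?_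
    exact mul_nonpos_of_nonpos_of_nonneg (by linarith)
      (mul_nonneg (hnn s hsI) (sin_pi_div_mul_pos ht hs).le)

theorem eq_zero_of_sineWronskian_eq_zero {lam s : ℝ} (ht : 0 < t) (hlam : (π / t) ^ 2 < lam)
    (hh : ContDiffOn ℝ 2 h (Icc 0 t)) (hW : ∀ x ∈ Icc 0 t, sineWronskian t h x = 0)
    (hs : s ∈ Ioo 0 t) (hnn : 0 ≤ h s) (hineq : deriv (deriv h) s ≤ -lam * h s) : h s = 0 := by
  have hW' : (deriv (deriv h) s + (π / t) ^ 2 * h s) * sin (π / t * s) = 0 := by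
    have hconst : sineWronskian t h =ᶠ[nhds s] fun _ ↦ 0 := by
      filter_upwards [Icc_mem_nhds hs.1 hs.2] with x hx using hW x hx
    exact (hasDerivAt_sineWronskian hh hs).unique
      ((hasDerivAt_const s 0).congr_of_eventuallyEq hconst)
  have hsin := sin_pi_div_mul_pos ht hs
  have hprod : h s * sin (π / t * s) ≤ 0 :=
    nonpos_of_mul_nonpos_right (a := lam - (π / t) ^ 2)
      (by linarith [sineWronskian_deriv_le ht hs hineq]) (by linarith)
  exact (mul_eq_zero.1 (le_antisymm hprod (mul_nonneg hnn hsin.le))).resolve_right hsin.ne'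

end sineWronskian

theorem stmt_0 (t lam : ℝ) (ht : 0 < t) (hlam : Real.pi ^ 2 / t ^ 2 < lam)
    (h : ℝ → ℝ) (hC2 : ContDiffOn ℝ 2 h (Set.Icc 0 t))
    (hnn : ∀ s ∈ Set.Icc 0 t, 0 ≤ h s)
    (hineq : ∀ s ∈ Set.Icc 0 t, deriv (deriv h) s ≤ -lam * h s) :
    ∀ s ∈ Set.Icc 0 t, h s = 0 := by
  have hc : (π / t) ^ 2 < lam := by rwa [div_pow]
  have hc0 : 0 < π / t := div_pos pi_pos ht
  have h0 : (0 : ℝ) ∈ Icc 0 t := left_mem_Icc.2 ht.le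
  have ht' : t ∈ Icc 0 t := right_mem_Icc.2 ht.le
  have hanti := antitoneOn_sineWronskian ht hc.le hC2 hnn hineq
  have hW0 : sineWronskian t h 0 ≤ 0 := by
    rw [sineWronskian_zero]; linarith [mul_nonneg hc0.le (hnn 0 h0)]
  have hWt : 0 ≤ sineWronskian t h t := by
    rw [sineWronskian_self ht]; exact mul_nonneg hc0.le (hnn t ht')
  have hW : ∀ s ∈ Icc 0 t, sineWronskian t h s = 0 := fun s hs ↦
    le_antisymm ((hanti h0 hs hs.1).trans hW0) (hWt.trans (hanti hs ht' hs.2))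
  intro s hs
  rcases hs.1.eq_or_lt with rfl | hs0
  · simpa [sineWronskian_zero, hc0.ne'] using hW 0 h0
  rcases hs.2.eq_or_lt with rfl | hst
  · simpa [sineWronskian_self ht, hc0.ne'] using hW s ht'
  exact eq_zero_of_sineWronskian_eq_zero ht hc hC2 hW ⟨hs0, hst⟩ (hnn s hs) (hineq s hs)
end

section
/- Let t>0, λ∈ℝ with 0 < λ < π²/t², and h a C² nonnegative function on [0,t] satisfying h'' ≤ -λ h on [0,t]. Then for all s ∈ [0,t], h(s) ≥ (sin(√λ (t-s))/sin(√λ t)) h(0) + (sin(√λ s)/sin(√λ t)) h(t). -/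
/-!
Sturm comparison with the sine solutions of `u'' = -λ u`. For `u = sin (√λ x)` and
`u = sin (√λ (t - x))`, both nonnegative on `[0, t]` because `√λ t < π`, the Wronskian
`h' u - h u'` has derivative `(h'' + λ h) u ≤ 0`, so it decreases. Comparing the first Wronskian
with its value `-√λ h 0` at `0` and the second with its value `√λ h t` at `t`, and eliminating
`h'(s)` between the two inequalities, gives the bound, since
`sin (√λ (t - s)) cos (√λ s) + cos (√λ (t - s)) sin (√λ s) = sin (√λ t)`.
-/

open Set Real Filter Topology

section Wronskian

variable {a b : ℝ} {h : ℝ → ℝ}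

lemma ContDiffOn.hasDerivAt_derivWithin_Icc (hab : a < b) (hh : ContDiffOn ℝ 2 h (Icc a b))
    {x : ℝ} (hx : x ∈ Ioo a b) :
    HasDerivAt (derivWithin h (Icc a b)) (deriv (deriv h) x) x := by
  have hnhds : Icc a b ∈ 𝓝 x := Icc_mem_nhds hx.1 hx.2
  have heq : derivWithin h (Icc a b) =ᶠ[𝓝 x] deriv h := by
    filter_upwards [Ioo_mem_nhds hx.1 hx.2] with y hy
    exact derivWithin_of_mem_nhds (Icc_mem_nhds hy.1 hy.2)
  have hdiff : DifferentiableAt ℝ (derivWithin h (Icc a b)) x :=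
    ((hh.derivWithin (uniqueDiffOn_Icc hab) (by norm_num)).differentiableOn one_ne_zero x
      (Ioo_subset_Icc_self hx)).differentiableAt hnhds
  exact heq.deriv_eq ▸ hdiff.hasDerivAt

-- `derivWithin` keeps the Wronskian continuous at the endpoints, where `deriv h` may be junk.
theorem antitoneOn_wronskian_of_deriv_deriv_le (hab : a < b) (hh : ContDiffOn ℝ 2 h (Icc a b))
    {lam : ℝ} (hineq : ∀ x ∈ Ioo a b, deriv (deriv h) x ≤ -lam * h x)
    {u u' : ℝ → ℝ} (hu : ∀ x, HasDerivAt u (u' x) x) (hu' : ∀ x, HasDerivAt u' (-lam * u x) x)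
    (hu_nonneg : ∀ x ∈ Ioo a b, 0 ≤ u x) :
    AntitoneOn (fun x ↦ derivWithin h (Icc a b) x * u x - h x * u' x) (Icc a b) := by
  have hcont : ContinuousOn (fun x ↦ derivWithin h (Icc a b) x * u x - h x * u' x) (Icc a b) :=
    ((hh.continuousOn_derivWithin (uniqueDiffOn_Icc hab) (by norm_num)).mul
      (continuous_iff_continuousAt.2 fun x ↦ (hu x).continuousAt).continuousOn).sub
      (hh.continuousOn.mul
        (continuous_iff_continuousAt.2 fun x ↦ (hu' x).continuousAt).continuousOn)
  refine antitoneOn_of_hasDerivWithinAt_nonpos (convex_Icc a b) hcont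
    (f' := fun x ↦ (deriv (deriv h) x + lam * h x) * u x) (fun x hx ↦ ?_) (fun x hx ↦ ?_)
  all_goals rw [interior_Icc] at hx
  · have hh' : HasDerivAt h (derivWithin h (Icc a b) x) x :=
      (hh.differentiableOn (by norm_num) x (Ioo_subset_Icc_self hx)).hasDerivWithinAt.hasDerivAt
        (Icc_mem_nhds hx.1 hx.2)
    exact (((hh.hasDerivAt_derivWithin_Icc hab hx).mul (hu x)).sub
      (hh'.mul (hu' x))).hasDerivWithinAt.congr_deriv (by ring)
  · exact mul_nonpos_of_nonpos_of_nonneg (by linarith [hineq x hx]) (hu_nonneg x hx)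

end Wronskian

lemma hasDerivAt_sin_comp_of_hasDerivAt {g : ℝ → ℝ} {k : ℝ} (hg : ∀ x, HasDerivAt g k x)
    (x : ℝ) : HasDerivAt (fun y ↦ sin (g y)) (k * cos (g x)) x :=
  mul_comm (cos (g x)) k ▸ (hg x).sin

lemma hasDerivAt_mul_cos_comp_of_hasDerivAt {g : ℝ → ℝ} {k : ℝ} (hg : ∀ x, HasDerivAt g k x)
    (x : ℝ) : HasDerivAt (fun y ↦ k * cos (g y)) (-k ^ 2 * sin (g x)) x :=
  ((hg x).cos.const_mul k).congr_deriv (by ring)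

lemma sin_mul_nonneg_of_mem_Icc {c t x : ℝ} (hc : 0 ≤ c) (hct : c * t ≤ π) (hx : x ∈ Icc 0 t) :
    0 ≤ sin (c * x) :=
  sin_nonneg_of_nonneg_of_le_pi (mul_nonneg hc hx.1)
    (le_trans (mul_le_mul_of_nonneg_left hx.2 hc) hct)

theorem stmt_1_general (t lam : ℝ) (ht : 0 < t) (hlam0 : 0 < lam)
    (hlam : lam < Real.pi ^ 2 / t ^ 2)
    (h : ℝ → ℝ) (hC2 : ContDiffOn ℝ 2 h (Set.Icc 0 t))
    (hineq : ∀ s ∈ Set.Icc 0 t, deriv (deriv h) s ≤ -lam * h s) :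
    ∀ s ∈ Set.Icc 0 t,
      Real.sin (Real.sqrt lam * (t - s)) / Real.sin (Real.sqrt lam * t) * h 0 +
        Real.sin (Real.sqrt lam * s) / Real.sin (Real.sqrt lam * t) * h t ≤ h s := by
  intro s hs
  set c := √lam
  have hc : 0 < c := sqrt_pos.2 hlam0
  have hc2 : c ^ 2 = lam := sq_sqrt hlam0.le
  have hct : c * t < π := by
    rw [← lt_div_iff₀ ht, sqrt_lt' (by positivity), div_pow]
    exact hlam
  have hsin : ∀ x ∈ Icc 0 t, 0 ≤ sin (c * x) := fun x ↦ sin_mul_nonneg_of_mem_Icc hc.le hct.le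
  have hsin_rev : ∀ x ∈ Icc 0 t, 0 ≤ sin (c * (t - x)) := fun x hx ↦
    hsin _ ⟨by linarith [hx.2], by linarith [hx.1]⟩
  have hineq' : ∀ x ∈ Ioo 0 t, deriv (deriv h) x ≤ -(c ^ 2) * h x :=
    fun x hx ↦ hc2 ▸ hineq x (Ioo_subset_Icc_self hx)
  have hfwd : ∀ x, HasDerivAt (fun y ↦ c * y) c x := fun x ↦ by
    simpa using (hasDerivAt_id x).const_mul c
  have hbwd : ∀ x, HasDerivAt (fun y ↦ c * (t - y)) (-c) x := fun x ↦ by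
    simpa using ((hasDerivAt_id x).const_sub t).const_mul c
  have hA := antitoneOn_wronskian_of_deriv_deriv_le ht hC2 hineq'
    (hasDerivAt_sin_comp_of_hasDerivAt hfwd) (hasDerivAt_mul_cos_comp_of_hasDerivAt hfwd)
    fun x hx ↦ hsin x (Ioo_subset_Icc_self hx)
  have hB := antitoneOn_wronskian_of_deriv_deriv_le ht hC2 (neg_sq c ▸ hineq')
    (hasDerivAt_sin_comp_of_hasDerivAt hbwd) (hasDerivAt_mul_cos_comp_of_hasDerivAt hbwd)
    fun x hx ↦ hsin_rev x (Ioo_subset_Icc_self hx)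
  have hAs := hA (left_mem_Icc.2 ht.le) hs hs.1
  have hBs := hB hs (right_mem_Icc.2 ht.le) hs.2
  simp only [mul_zero, sub_self, sin_zero, cos_zero, mul_one, zero_sub] at hAs hBs
  have hsum : sin (c * (t - s)) * cos (c * s) + cos (c * (t - s)) * sin (c * s) = sin (c * t) := by
    rw [← sin_add]; congr 1; ring
  have hS : 0 < sin (c * t) := sin_pos_of_pos_of_lt_pi (by positivity) hct
  rw [div_mul_eq_mul_div, div_mul_eq_mul_div, ← add_div, div_le_iff₀ hS, ← hsum]
  nlinarith [mul_le_mul_of_nonneg_left hAs (hsin_rev s hs),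
    mul_le_mul_of_nonneg_left hBs (hsin s hs)]

theorem stmt_1 (t lam : ℝ) (ht : 0 < t) (hlam0 : 0 < lam)
    (hlam : lam < Real.pi ^ 2 / t ^ 2)
    (h : ℝ → ℝ) (hC2 : ContDiffOn ℝ 2 h (Set.Icc 0 t))
    (hnn : ∀ s ∈ Set.Icc 0 t, 0 ≤ h s)
    (hineq : ∀ s ∈ Set.Icc 0 t, deriv (deriv h) s ≤ -lam * h s) :
    ∀ s ∈ Set.Icc 0 t,
      Real.sin (Real.sqrt lam * (t - s)) / Real.sin (Real.sqrt lam * t) * h 0 +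
        Real.sin (Real.sqrt lam * s) / Real.sin (Real.sqrt lam * t) * h t ≤ h s :=
  stmt_1_general t lam ht hlam0 hlam h hC2 hineq
end

section
/- Let t>0, λ<0, and h a C² nonnegative function on [0,t] satisfying h'' ≤ -λ h on [0,t]. Then for all s ∈ [0,t], h(s) ≥ (sinh(√(-λ)(t-s))/sinh(√(-λ) t)) h(0) + (sinh(√(-λ) s)/sinh(√(-λ) t)) h(t). -/
/-!
With `μ = √(-λ)`, the function `g = sinhInterp μ t (h 0) (h t)` solves `g'' = μ² g` with the
same boundary values as `h`, so `w = h - g` vanishes at `0` and `t` and satisfies `w'' ≤ μ² w`.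
Wherever `w < 0` it is therefore strictly concave, so `w` cannot attain a negative interior
minimum, and `w ≥ 0` on `[0, t]`.
-/

open Set Real Filter Topology

theorem IsLocalMin.not_eventually_deriv2_neg {w : ℝ → ℝ} {x : ℝ} (hmin : IsLocalMin w x)
    (hcont : ∀ᶠ y in 𝓝 x, ContinuousAt w y) (hneg : ∀ᶠ y in 𝓝 x, deriv^[2] w y < 0) :
    False := by
  obtain ⟨ε, hε, hball⟩ := Metric.eventually_nhds_iff_ball.1 (hmin.and (hcont.and hneg))
  set δ := ε / 2 with hδ
  have hsub : Icc (x - δ) (x + δ) ⊆ Metric.ball x ε := by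
    intro y hy
    rw [Metric.mem_ball, Real.dist_eq, abs_lt]
    constructor <;> linarith [hy.1, hy.2]
  have hconc : StrictConcaveOn ℝ (Icc (x - δ) (x + δ)) w := by
    refine strictConcaveOn_of_deriv2_neg (convex_Icc _ _)
      (fun y hy => (hball y (hsub hy)).2.1.continuousWithinAt) fun y hy => ?_
    rw [interior_Icc] at hy
    exact (hball y (hsub (Ioo_subset_Icc_self hy))).2.2
  have hhalf : (0 : ℝ) < 1 / 2 := by norm_num
  have hmid := hconc.2 (x := x - δ) (y := x + δ) ⟨le_rfl, by linarith⟩ ⟨by linarith, le_rfl⟩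
    (by linarith) hhalf hhalf (by norm_num)
  have hx : (1 / 2 : ℝ) • (x - δ) + (1 / 2 : ℝ) • (x + δ) = x := by simp only [smul_eq_mul]; ring
  rw [hx, smul_eq_mul, smul_eq_mul] at hmid
  linarith [(hball (x - δ) (hsub ⟨le_rfl, by linarith⟩)).1,
    (hball (x + δ) (hsub ⟨by linarith, le_rfl⟩)).1]

theorem nonneg_of_deriv2_neg_of_neg {w : ℝ → ℝ} {a b : ℝ} (hw : ContinuousOn w (Icc a b))
    (ha : 0 ≤ w a) (hb : 0 ≤ w b) (hneg : ∀ x ∈ Ioo a b, w x < 0 → deriv^[2] w x < 0) :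
    ∀ x ∈ Icc a b, 0 ≤ w x := by
  intro x hx
  obtain ⟨x₀, hx₀, hmin⟩ := isCompact_Icc.exists_isMinOn (nonempty_of_mem hx) hw
  by_contra! hwx
  have hwx₀ : w x₀ < 0 := (hmin hx).trans_lt hwx
  have hx₀' : x₀ ∈ Ioo a b := by
    refine ⟨lt_of_le_of_ne hx₀.1 ?_, lt_of_le_of_ne hx₀.2 ?_⟩ <;> rintro rfl <;> linarith
  have hnhds : Ioo a b ∈ 𝓝 x₀ := Ioo_mem_nhds hx₀'.1 hx₀'.2
  have hcont : ∀ᶠ y in 𝓝 x₀, ContinuousAt w y :=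
    eventually_of_mem hnhds fun y hy => hw.continuousAt (Icc_mem_nhds hy.1 hy.2)
  refine (hmin.isLocalMin (Icc_mem_nhds hx₀'.1 hx₀'.2)).not_eventually_deriv2_neg hcont ?_
  filter_upwards [hnhds, hcont.self_of_nhds.eventually (gt_mem_nhds hwx₀)]
    with y hy hwy using hneg y hy hwy

noncomputable def sinhInterp (μ t A B s : ℝ) : ℝ :=
  sinh (μ * (t - s)) / sinh (μ * t) * A + sinh (μ * s) / sinh (μ * t) * B

section sinhInterp

variable (μ t A B : ℝ)

theorem sinhInterp_zero (ht : sinh (μ * t) ≠ 0) : sinhInterp μ t A B 0 = A := by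
  simp [sinhInterp, div_self ht]

theorem sinhInterp_self (ht : sinh (μ * t) ≠ 0) : sinhInterp μ t A B t = B := by
  simp [sinhInterp, div_self ht]

theorem contDiff_sinhInterp : ContDiff ℝ 2 (sinhInterp μ t A B) := by
  unfold sinhInterp; fun_prop

theorem deriv_sinhInterp : deriv (sinhInterp μ t A B) = fun s =>
    (μ * cosh (μ * s) * B - μ * cosh (μ * (t - s)) * A) / sinh (μ * t) := by
  ext s
  refine HasDerivAt.deriv ?_
  have h₁ := (((hasDerivAt_id' s).const_sub t).const_mul μ).sinh
  have h₂ := ((hasDerivAt_id' s).const_mul μ).sinh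
  exact (((h₁.div_const (sinh (μ * t))).mul_const A).add
    ((h₂.div_const (sinh (μ * t))).mul_const B)).congr_deriv (by ring)

theorem iteratedDeriv_two_sinhInterp (s : ℝ) :
    iteratedDeriv 2 (sinhInterp μ t A B) s = μ ^ 2 * sinhInterp μ t A B s := by
  rw [iteratedDeriv_succ, iteratedDeriv_one, deriv_sinhInterp]
  refine HasDerivAt.deriv ?_
  have h₁ := (((hasDerivAt_id' s).const_sub t).const_mul μ).cosh
  have h₂ := ((hasDerivAt_id' s).const_mul μ).cosh
  exact ((((h₂.const_mul μ).mul_const B).sub ((h₁.const_mul μ).mul_const A)).div_const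
    (sinh (μ * t))).congr_deriv (by unfold sinhInterp; ring)

end sinhInterp

theorem stmt_2_general (t lam : ℝ) (ht : 0 < t) (hlam : lam < 0)
    (h : ℝ → ℝ) (hC2 : ContDiffOn ℝ 2 h (Set.Icc 0 t))
    (hineq : ∀ s ∈ Set.Icc 0 t, deriv (deriv h) s ≤ -lam * h s) :
    ∀ s ∈ Set.Icc 0 t,
      Real.sinh (Real.sqrt (-lam) * (t - s)) / Real.sinh (Real.sqrt (-lam) * t) * h 0 +
        Real.sinh (Real.sqrt (-lam) * s) / Real.sinh (Real.sqrt (-lam) * t) * h t ≤ h s := by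
  set μ := √(-lam)
  have hμ : μ ^ 2 = -lam := sq_sqrt (by linarith)
  have hS : sinh (μ * t) ≠ 0 := (sinh_pos_iff.2 (mul_pos (sqrt_pos.2 (by linarith)) ht)).ne'
  set g := sinhInterp μ t (h 0) (h t)
  suffices ∀ s ∈ Icc 0 t, 0 ≤ (h - g) s from fun s hs => sub_nonneg.1 (this s hs)
  refine nonneg_of_deriv2_neg_of_neg
    (hC2.continuousOn.sub (contDiff_sinhInterp ..).continuous.continuousOn)
    (by simp [g, sinhInterp_zero _ _ _ _ hS]) (by simp [g, sinhInterp_self _ _ _ _ hS])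
    fun s hs hneg => ?_
  have hCs : ContDiffAt ℝ 2 h s := hC2.contDiffAt (Icc_mem_nhds hs.1 hs.2)
  have hw'' : deriv^[2] (h - g) s = deriv (deriv h) s - μ ^ 2 * g s := by
    rw [← iteratedDeriv_eq_iterate, iteratedDeriv_sub hCs (contDiff_sinhInterp ..).contDiffAt,
      iteratedDeriv_two_sinhInterp, iteratedDeriv_eq_iterate]
    rfl
  calc deriv^[2] (h - g) s ≤ μ ^ 2 * h s - μ ^ 2 * g s := by
        rw [hw'', hμ]; linarith [hineq s (Ioo_subset_Icc_self hs)]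
    _ = μ ^ 2 * (h - g) s := by simp only [Pi.sub_apply]; ring
    _ < 0 := mul_neg_of_pos_of_neg (by rw [hμ]; linarith) hneg

theorem stmt_2 (t lam : ℝ) (ht : 0 < t) (hlam : lam < 0)
    (h : ℝ → ℝ) (hC2 : ContDiffOn ℝ 2 h (Set.Icc 0 t))
    (hnn : ∀ s ∈ Set.Icc 0 t, 0 ≤ h s)
    (hineq : ∀ s ∈ Set.Icc 0 t, deriv (deriv h) s ≤ -lam * h s) :
    ∀ s ∈ Set.Icc 0 t,
      Real.sinh (Real.sqrt (-lam) * (t - s)) / Real.sinh (Real.sqrt (-lam) * t) * h 0 +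
        Real.sinh (Real.sqrt (-lam) * s) / Real.sinh (Real.sqrt (-lam) * t) * h t ≤ h s :=
  stmt_2_general t lam ht hlam h hC2 hineq
end

section
/- For every fixed u ∈ (0,1), the function y ↦ sin(y u)/sin(y) is strictly increasing and positive on the interval (0, π). -/
/-!
Writing `f y = sin (y u) / sin y`, the sign of `f'` is that of
`u cos (y u) sin y - sin (y u) cos y`, which after dividing by `sin (y u) sin y / y` is
`g (y u) - g y` for `g t = t cot t`. Since `g' t = (sin t cos t - t) / sin² t < 0` on `(0, π)`
(because `sin 2t < 2t`), `g` is strictly decreasing there, and `y u < y` gives `f' > 0`.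
-/

open Real Set

lemma hasDerivAt_mul_cos_div_sin {t : ℝ} (ht : sin t ≠ 0) :
    HasDerivAt (fun t => t * cos t / sin t) ((sin t * cos t - t) / sin t ^ 2) t := by
  have h : HasDerivAt (fun t => t * cos t / sin t)
      (((1 * cos t + t * -sin t) * sin t - t * cos t * cos t) / sin t ^ 2) t :=
    ((hasDerivAt_id t).mul (hasDerivAt_cos t)).div (hasDerivAt_sin t) ht
  convert h using 2
  linear_combination t * sin_sq_add_cos_sq t

lemma strictAntiOn_mul_cos_div_sin :
    StrictAntiOn (fun t => t * cos t / sin t) (Ioo 0 π) := by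
  apply strictAntiOn_of_deriv_neg (convex_Ioo 0 π)
  · exact (continuous_id.mul continuous_cos).continuousOn.div continuous_sin.continuousOn
      fun t ht => (sin_pos_of_pos_of_lt_pi ht.1 ht.2).ne'
  · intro t ht
    rw [interior_Ioo] at ht
    have hsin : 0 < sin t := sin_pos_of_pos_of_lt_pi ht.1 ht.2
    have hsin_two_mul : sin (2 * t) < 2 * t := sin_lt (by linarith [ht.1])
    rw [sin_two_mul] at hsin_two_mul
    rw [(hasDerivAt_mul_cos_div_sin hsin.ne').deriv]
    exact div_neg_of_neg_of_pos (by linarith) (by positivity)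

lemma hasDerivAt_sin_mul_div_sin (u : ℝ) {y : ℝ} (hy : sin y ≠ 0) :
    HasDerivAt (fun y => sin (y * u) / sin y)
      ((cos (y * u) * u * sin y - sin (y * u) * cos y) / sin y ^ 2) y :=
  (hasDerivAt_mul_const u).sin.div (hasDerivAt_sin y) hy

lemma sin_mul_mul_cos_lt {u y : ℝ} (hu0 : 0 < u) (hu1 : u < 1) (hy : y ∈ Ioo 0 π) :
    sin (y * u) * cos y < cos (y * u) * u * sin y := by
  have hyu_lt : y * u < y := mul_lt_of_lt_one_right hy.1 hu1
  have hyu : y * u ∈ Ioo 0 π := ⟨mul_pos hy.1 hu0, hyu_lt.trans hy.2⟩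
  have hsin_yu : 0 < sin (y * u) := sin_pos_of_pos_of_lt_pi hyu.1 hyu.2
  have hsin_y : 0 < sin y := sin_pos_of_pos_of_lt_pi hy.1 hy.2
  have hanti := strictAntiOn_mul_cos_div_sin hyu hy hyu_lt
  simp only at hanti
  rw [div_lt_div_iff₀ hsin_y hsin_yu] at hanti
  nlinarith [hy.1]

theorem stmt_4 (u : ℝ) (hu0 : 0 < u) (hu1 : u < 1) :
    StrictMonoOn (fun y => Real.sin (y * u) / Real.sin y) (Set.Ioo 0 Real.pi) ∧
      ∀ y ∈ Set.Ioo 0 Real.pi, 0 < Real.sin (y * u) / Real.sin y := by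
  have hsin_pos : ∀ y ∈ Ioo 0 π, 0 < sin y := fun y hy => sin_pos_of_pos_of_lt_pi hy.1 hy.2
  refine ⟨?_, fun y hy => div_pos ?_ (hsin_pos y hy)⟩
  · apply strictMonoOn_of_deriv_pos (convex_Ioo 0 π)
    · exact (continuous_sin.comp (continuous_mul_const u)).continuousOn.div
        continuous_sin.continuousOn fun y hy => (hsin_pos y hy).ne'
    · intro y hy
      rw [interior_Ioo] at hy
      rw [(hasDerivAt_sin_mul_div_sin u (hsin_pos y hy).ne').deriv]
      exact div_pos (sub_pos.2 (sin_mul_mul_cos_lt hu0 hu1 hy)) (pow_pos (hsin_pos y hy) 2)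
  · exact sin_pos_of_pos_of_lt_pi (mul_pos hy.1 hu0)
      ((mul_lt_of_lt_one_right hy.1 hu1).trans hy.2)
end

section
/- For every fixed u ∈ (0,1), the function y ↦ sinh(y u)/sinh(y) is strictly decreasing on (0, ∞). -/
/-!
The derivative of `y ↦ sinh (y u) / sinh y` has the sign of
`N y = u cosh (y u) sinh y - sinh (y u) cosh y`. Since `N 0 = 0` and
`N' y = (u² - 1) sinh (y u) sinh y < 0` for `y > 0`, the function `N` is negative on `(0, ∞)`.
-/

open Real Set

lemma hasDerivAt_mul_cosh_mul_sinh_sub_sinh_mul_cosh (u y : ℝ) :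
    HasDerivAt (fun y => u * cosh (y * u) * sinh y - sinh (y * u) * cosh y)
      ((u ^ 2 - 1) * sinh (y * u) * sinh y) y := by
  have hyu : HasDerivAt (· * u) u y := by simpa using (hasDerivAt_id y).mul_const u
  exact (((hyu.cosh.const_mul u).mul (hasDerivAt_sinh y)).sub
    (hyu.sinh.mul (hasDerivAt_cosh y))).congr_deriv (by ring)

lemma mul_cosh_mul_sinh_lt_sinh_mul_cosh {u y : ℝ} (hu0 : 0 < u) (hu1 : u < 1) (hy : 0 < y) :
    u * cosh (y * u) * sinh y < sinh (y * u) * cosh y := by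
  have hderiv := hasDerivAt_mul_cosh_mul_sinh_sub_sinh_mul_cosh u
  have hN : StrictAntiOn (fun y => u * cosh (y * u) * sinh y - sinh (y * u) * cosh y) (Ici 0) := by
    refine strictAntiOn_of_hasDerivWithinAt_neg (convex_Ici 0)
      (fun x _ => (hderiv x).continuousAt.continuousWithinAt)
      (fun x _ => (hderiv x).hasDerivWithinAt) ?_
    intro x hx
    rw [interior_Ici, mem_Ioi] at hx
    have hu : u ^ 2 - 1 < 0 := by nlinarith
    exact mul_neg_of_neg_of_pos (mul_neg_of_neg_of_pos hu (sinh_pos_iff.2 (mul_pos hx hu0)))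
      (sinh_pos_iff.2 hx)
  simpa using hN self_mem_Ici hy.le hy

lemma hasDerivAt_sinh_mul_div_sinh (u : ℝ) {y : ℝ} (hy : sinh y ≠ 0) :
    HasDerivAt (fun y => sinh (y * u) / sinh y)
      ((u * cosh (y * u) * sinh y - sinh (y * u) * cosh y) / sinh y ^ 2) y := by
  have hyu : HasDerivAt (· * u) u y := by simpa using (hasDerivAt_id y).mul_const u
  exact (hyu.sinh.div (hasDerivAt_sinh y) hy).congr_deriv (by ring)

theorem stmt_6 (u : ℝ) (hu0 : 0 < u) (hu1 : u < 1) :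
    StrictAntiOn (fun y => Real.sinh (y * u) / Real.sinh y) (Set.Ioi 0) := by
  have hderiv (y : ℝ) (hy : y ∈ Ioi 0) := hasDerivAt_sinh_mul_div_sinh u (sinh_pos_iff.2 hy).ne'
  refine strictAntiOn_of_hasDerivWithinAt_neg (convex_Ioi 0)
    (fun y hy => (hderiv y hy).continuousAt.continuousWithinAt)
    (fun y hy => (hderiv y (interior_subset hy)).hasDerivWithinAt) fun y hy => ?_
  rw [interior_Ioi, mem_Ioi] at hy
  exact div_neg_of_neg_of_pos (sub_neg.2 (mul_cosh_mul_sinh_lt_sinh_mul_cosh hu0 hu1 hy))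
    (pow_pos (sinh_pos_iff.2 hy) 2)
end

section
/- For every y ∈ (0, π), y·cot(y) < 1 - y²/4. -/
/-!
Put `u = y / 2 ∈ (0, π / 2)` and `t = tan u`. The double angle formula gives
`y cot y = u (1 / t - t)`, and since `t > u > 0` while `x ↦ 1 / x - x` is strictly decreasing on
`(0, ∞)`, this is less than `u (1 / u - u) = 1 - y ^ 2 / 4`.
-/

open Real

lemma inv_sub_self_lt_inv_sub_self {a b : ℝ} (ha : 0 < a) (hab : a < b) :
    b⁻¹ - b < a⁻¹ - a := by
  have : b⁻¹ < a⁻¹ := inv_strictAnti₀ ha hab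
  linarith

lemma cos_two_mul_div_sin_two_mul (u : ℝ) :
    cos (2 * u) / sin (2 * u) = ((tan u)⁻¹ - tan u) / 2 := by
  rw [← inv_div, ← tan_eq_sin_div_cos, tan_two_mul, inv_div]
  rcases eq_or_ne (tan u) 0 with h | h
  · simp [h]
  · field_simp

lemma mul_cos_div_sin_eq_half_mul_inv_tan_sub_tan (y : ℝ) :
    y * (cos y / sin y) = y / 2 * ((tan (y / 2))⁻¹ - tan (y / 2)) := by
  have h := cos_two_mul_div_sin_two_mul (y / 2)
  rw [mul_div_cancel₀ _ two_ne_zero] at h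
  rw [h]
  ring

theorem stmt_10 (y : ℝ) (hy0 : 0 < y) (hyπ : y < Real.pi) :
    y * (Real.cos y / Real.sin y) < 1 - y ^ 2 / 4 := by
  have hu0 : 0 < y / 2 := by positivity
  have hu_tan : y / 2 < tan (y / 2) := lt_tan hu0 (by linarith)
  calc y * (cos y / sin y) = y / 2 * ((tan (y / 2))⁻¹ - tan (y / 2)) :=
        mul_cos_div_sin_eq_half_mul_inv_tan_sub_tan y
    _ < y / 2 * ((y / 2)⁻¹ - y / 2) :=
        mul_lt_mul_of_pos_left (inv_sub_self_lt_inv_sub_self hu0 hu_tan) hu0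
    _ = 1 - y ^ 2 / 4 := by field_simp; ring
end

section
/- Fix ρ>0 and t ≥ 1/(2ρ). Let u = 1 + 2e^{-ρt}. Then (u-1)e^{ρtu} ≥ u+1; consequently the negative root ξ₁ of the equation x - 2 + 2√(1-x) coth(ρt√(1-x)) = 0 satisfies ξ₁ ≥ 1 - u² = -4e^{-ρt} - 4e^{-2ρt}. -/
open Real

/-- With `e = exp (-s)` one has `(u - 1) exp (s u) = 2 exp (2 s e)`, and `exp v ≥ 1 + v` with
`v = 2 s e ≥ e` gives the bound. -/
theorem sub_one_mul_exp_mul_ge_add_one {s u : ℝ} (hs : 1 / 2 ≤ s) (hu : u = 1 + 2 * exp (-s)) :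
    (u - 1) * exp (s * u) ≥ u + 1 := by
  subst hu
  have hfactor : exp (-s) * exp (s * (1 + 2 * exp (-s))) = exp (2 * s * exp (-s)) := by
    rw [← exp_add]; ring_nf
  have he : 0 < exp (-s) := exp_pos _
  calc 1 + 2 * exp (-s) + 1 ≤ 2 * (2 * s * exp (-s) + 1) := by nlinarith
    _ ≤ 2 * exp (2 * s * exp (-s)) := by gcongr; exact add_one_le_exp _
    _ = (1 + 2 * exp (-s) - 1) * exp (s * (1 + 2 * exp (-s))) := by rw [← hfactor]; ring

theorem stmt_13 (ρ t : ℝ) (hρ : 0 < ρ) (ht : 1 / (2 * ρ) ≤ t) :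
    (1 + 2 * Real.exp (-ρ * t) - 1) * Real.exp (ρ * t * (1 + 2 * Real.exp (-ρ * t))) ≥
      (1 + 2 * Real.exp (-ρ * t)) + 1 := by
  have hs : 1 / 2 ≤ ρ * t := by
    rw [div_le_iff₀ (by positivity)] at ht
    linarith
  rw [neg_mul]
  exact sub_one_mul_exp_mul_ge_add_one hs rfl
end
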